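/- Let L₁, L₂ > 0, k_ap > 0, k_ad > 0, and define k_p = k_ap + ω_o k_ad, k_d = k_ad + ω_o, k_i = ω_o k_ap. If ω_o > ω_o*, then (k_p − L₁)(k_d − L₂) − k_i > L₂ √(k_i (k_d − L₂)); in particular (k_p − L₁)(k_d − L₂) − k_i > 0 and [(k_p − L₁)(k_d − L₂) − k_i]² > L₂² k_i (k_d − L₂). -/
import Mathlib


open Real Set

/-- The lower bound `ω_o*` to the ESO gain: `ω_o* = max {0, (L₁−k_ap)/k_ad, L₂−k_ad, ω̄_o}`,
where `ω̄_o = max Ω` if the real root set `Ω` of the quartic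
`n₀ω⁴ + n₁ω³ + n₂ω² + n₃ω + n₄ = 0` is nonempty with positive maximum, and `ω̄_o = 0` otherwise.
(Since `k_ad > 0` the root set is finite, so its supremum is its maximum when nonempty,
and `sSup ∅ = 0` in `ℝ`; hence `ω̄_o = max 0 (sSup Ω)`.) -/
noncomputable def omegaStar (kap kad L1 L2 : ℝ) : ℝ :=
  max (max 0 ((L1 - kap) / kad))
    (max (L2 - kad)
      (max 0 (sSup {ω : ℝ |
          kad ^ 2 * ω ^ 4
        + (2 * kad * (kad * (kad - L2) - L1)) * ω ^ 3
        + (2 * kad * (kap - L1) * (kad - L2) + (kad * (kad - L2) - L1) ^ 2 - L2 ^ 2 * kap) * ω ^ 2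
        + (2 * (kad * (kad - L2) - L1) * (kap - L1) * (kad - L2) - L2 ^ 2 * kap * (kad - L2)) * ω
        + (kap - L1) ^ 2 * (kad - L2) ^ 2 = 0})))

private lemma quartic_big (a b c d e T : ℝ) (ha : 0 < a) (hT : 1 ≤ T)
    (h : a + |b| + |c| + |d| + |e| ≤ a * T) :
    0 < a * T ^ 4 + b * T ^ 3 + c * T ^ 2 + d * T + e := by
  have hb := neg_abs_le b
  have hc := neg_abs_le c
  have hd := neg_abs_le d
  have he := neg_abs_le e
  have hT0 : (0:ℝ) < T := by linarith
  nlinarith [pow_pos hT0 3, pow_pos hT0 2, sq_nonneg (T-1), sq_nonneg T,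
    mul_le_mul_of_nonneg_right h (le_of_lt (pow_pos hT0 3)),
    mul_le_mul_of_nonneg_left (one_le_pow₀ hT (n:=3)) (abs_nonneg e),
    mul_le_mul_of_nonneg_left (one_le_pow₀ hT (n:=2)) (abs_nonneg d),
    mul_le_mul_of_nonneg_left hT (abs_nonneg c),
    mul_le_mul_of_nonneg_left (abs_nonneg b) (le_of_lt (pow_pos hT0 3))]

private lemma quadratic_big (a b c T : ℝ) (ha : 0 < a) (hT : 1 ≤ T)
    (h : a + |b| + |c| ≤ a * T) :
    0 < a * T ^ 2 + b * T + c := by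
  have hb := neg_abs_le b
  have hc := neg_abs_le c
  have hT0 : (0:ℝ) < T := by linarith
  nlinarith [mul_le_mul_of_nonneg_right h (le_of_lt hT0),
    mul_le_mul_of_nonneg_left hT (abs_nonneg c)]

open Polynomial in
/-- A quartic with positive leading coefficient is positive beyond the sup of its root set. -/
private lemma beyond_roots (n0 n1 n2 n3 n4 : ℝ) (h0 : 0 < n0) (t : ℝ)
    (hts : sSup {ω : ℝ | n0 * ω ^ 4 + n1 * ω ^ 3 + n2 * ω ^ 2 + n3 * ω + n4 = 0} < t) :
    0 < n0 * t ^ 4 + n1 * t ^ 3 + n2 * t ^ 2 + n3 * t + n4 := by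
  set S := {ω : ℝ | n0 * ω ^ 4 + n1 * ω ^ 3 + n2 * ω ^ 2 + n3 * ω + n4 = 0} with hS
  have hp0 : (C n4 + C n3 * X + C n2 * X ^ 2 + C n1 * X ^ 3 + C n0 * X ^ 4 : ℝ[X]) ≠ 0 := by
    intro h
    have h4 := congrArg (fun q : ℝ[X] => q.coeff 4) h
    simp [coeff_add, coeff_C_mul, coeff_X_pow, coeff_C] at h4
    exact absurd h4 (ne_of_gt h0)
  have hfin : S.Finite := by
    apply (Polynomial.finite_setOf_isRoot hp0).subset
    intro s hs
    simp only [hS, mem_setOf_eq] at hs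
    simp only [mem_setOf_eq, IsRoot.def, eval_add, eval_mul, eval_pow, eval_C, eval_X]
    linarith
  have hroot_le : ∀ s : ℝ, n0 * s ^ 4 + n1 * s ^ 3 + n2 * s ^ 2 + n3 * s + n4 = 0 →
      s ≤ sSup S := fun s hs => le_csSup hfin.bddAbove (by exact hs)
  have hcont : Continuous fun x : ℝ =>
      n0 * x ^ 4 + n1 * x ^ 3 + n2 * x ^ 2 + n3 * x + n4 := by fun_prop
  set T := max t (max 1 ((n0 + |n1| + |n2| + |n3| + |n4|) / n0)) with hT
  have hTt : t ≤ T := le_max_left _ _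
  have hT1 : (1:ℝ) ≤ T := le_trans (le_max_left _ _) (le_max_right _ _)
  have hTb : n0 + |n1| + |n2| + |n3| + |n4| ≤ n0 * T := by
    have h : (n0 + |n1| + |n2| + |n3| + |n4|) / n0 ≤ T :=
      le_trans (le_max_right 1 _) (le_max_right t _)
    rw [div_le_iff₀ h0] at h
    calc n0 + |n1| + |n2| + |n3| + |n4| ≤ T * n0 := h
    _ = n0 * T := mul_comm _ _
  have hGT := quartic_big n0 n1 n2 n3 n4 T h0 hT1 hTb
  by_contra hG
  push_neg at hG
  have h0mem : (0:ℝ) ∈ Icc (n0 * t ^ 4 + n1 * t ^ 3 + n2 * t ^ 2 + n3 * t + n4)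
      (n0 * T ^ 4 + n1 * T ^ 3 + n2 * T ^ 2 + n3 * T + n4) := ⟨hG, hGT.le⟩
  obtain ⟨s, hs, hGs⟩ := intermediate_value_Icc hTt hcont.continuousOn h0mem
  exact absurd (hroot_le s hGs) (not_le.mpr (lt_of_lt_of_le hts hs.1))

/-- **Key inequality implied by `ω_o > ω_o*`.**
With `k_p = k_ap + ω_o k_ad`, `k_d = k_ad + ω_o`, `k_i = ω_o k_ap`: if `ω_o > ω_o*` then
`(k_p − L₁)(k_d − L₂) − k_i > L₂ √(k_i(k_d − L₂))`; in particular
`(k_p − L₁)(k_d − L₂) − k_i > 0` and `[(k_p − L₁)(k_d − L₂) − k_i]² > L₂² k_i (k_d − L₂)`. -/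
theorem omega_star_key_inequality
    (L1 L2 kap kad ωo kp kd ki : ℝ)
    (hL1 : 0 < L1) (hL2 : 0 < L2) (hkap : 0 < kap) (hkad : 0 < kad)
    (hkp : kp = kap + ωo * kad) (hkd : kd = kad + ωo) (hki : ki = ωo * kap)
    (hωo : ωo > omegaStar kap kad L1 L2) :
    (kp - L1) * (kd - L2) - ki > L2 * Real.sqrt (ki * (kd - L2)) ∧
    (kp - L1) * (kd - L2) - ki > 0 ∧
    ((kp - L1) * (kd - L2) - ki) ^ 2 > L2 ^ 2 * (ki * (kd - L2)) := by
  rw [gt_iff_lt, omegaStar] at hωo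
  simp only [max_lt_iff] at hωo
  obtain ⟨⟨hω0, hωL1⟩, hωL2, -, hωS⟩ := hωo
  have hx : 0 < kad + ωo - L2 := by linarith
  have hL1' : L1 - kap < ωo * kad := (div_lt_iff₀ hkad).mp hωL1
  -- the quartic is positive at every point `s ≥ ωo`
  have key : ∀ s : ℝ, ωo ≤ s →
      0 < kad ^ 2 * s ^ 4
        + (2 * kad * (kad * (kad - L2) - L1)) * s ^ 3
        + (2 * kad * (kap - L1) * (kad - L2) + (kad * (kad - L2) - L1) ^ 2 - L2 ^ 2 * kap) * s ^ 2
        + (2 * (kad * (kad - L2) - L1) * (kap - L1) * (kad - L2) - L2 ^ 2 * kap * (kad - L2)) * s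
        + (kap - L1) ^ 2 * (kad - L2) ^ 2 := by
    intro s hs
    exact beyond_roots _ _ _ _ _ (pow_pos hkad 2) s (lt_of_lt_of_le hωS hs)
  -- key ring identity: the quartic equals F(s)² − L₂² k_ap s (k_ad + s − L₂)
  have hq : ∀ s : ℝ,
      kad ^ 2 * s ^ 4
        + (2 * kad * (kad * (kad - L2) - L1)) * s ^ 3
        + (2 * kad * (kap - L1) * (kad - L2) + (kad * (kad - L2) - L1) ^ 2 - L2 ^ 2 * kap) * s ^ 2
        + (2 * (kad * (kad - L2) - L1) * (kap - L1) * (kad - L2) - L2 ^ 2 * kap * (kad - L2)) * s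
        + (kap - L1) ^ 2 * (kad - L2) ^ 2
      = (kad * s ^ 2 + (kad * (kad - L2) - L1) * s + (kap - L1) * (kad - L2)) ^ 2
        - L2 ^ 2 * kap * s * (kad + s - L2) := by
    intro s; ring
  -- positivity of F at ωo
  have hFcont : Continuous fun s : ℝ =>
      kad * s ^ 2 + (kad * (kad - L2) - L1) * s + (kap - L1) * (kad - L2) := by fun_prop
  have hFω : 0 < kad * ωo ^ 2 + (kad * (kad - L2) - L1) * ωo + (kap - L1) * (kad - L2) := by
    rcases lt_trichotomy
      (kad * ωo ^ 2 + (kad * (kad - L2) - L1) * ωo + (kap - L1) * (kad - L2)) 0 with hF | hF | hF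
    · exfalso
      set T := max ωo (max 1
        ((kad + |kad * (kad - L2) - L1| + |(kap - L1) * (kad - L2)|) / kad)) with hT
      have hT1 : (1:ℝ) ≤ T := le_trans (le_max_left _ _) (le_max_right _ _)
      have hTb : kad + |kad * (kad - L2) - L1| + |(kap - L1) * (kad - L2)| ≤ kad * T := by
        have h : (kad + |kad * (kad - L2) - L1| + |(kap - L1) * (kad - L2)|) / kad ≤ T :=
          le_trans (le_max_right 1 _) (le_max_right ωo _)
        rw [div_le_iff₀ hkad] at h
        linarith [h]
      have hFT := quadratic_big kad (kad * (kad - L2) - L1) ((kap - L1) * (kad - L2)) T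
        hkad hT1 hTb
      have h0mem : (0:ℝ) ∈ Icc
          (kad * ωo ^ 2 + (kad * (kad - L2) - L1) * ωo + (kap - L1) * (kad - L2))
          (kad * T ^ 2 + (kad * (kad - L2) - L1) * T + (kap - L1) * (kad - L2)) :=
        ⟨hF.le, hFT.le⟩
      obtain ⟨s, hs, hFs⟩ := intermediate_value_Icc (le_max_left ωo _)
        hFcont.continuousOn h0mem
      have hkey := key s hs.1
      rw [hq s] at hkey
      have hFs' : kad * s ^ 2 + (kad * (kad - L2) - L1) * s + (kap - L1) * (kad - L2) = 0 := hFs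
      rw [hFs'] at hkey
      have hs0 : 0 < s := lt_of_lt_of_le hω0 hs.1
      have hsx : 0 < kad + s - L2 := by linarith [hs.1]
      nlinarith [mul_pos (mul_pos (mul_pos (pow_pos hL2 2) hkap) hs0) hsx]
    · exfalso
      have hkey := key ωo le_rfl
      rw [hq ωo, hF] at hkey
      nlinarith [mul_pos (mul_pos (mul_pos (pow_pos hL2 2) hkap) hω0) hx]
    · exact hF
  -- the quartic positivity at ωo, rewritten
  have hquart : 0 <
      (kad * ωo ^ 2 + (kad * (kad - L2) - L1) * ωo + (kap - L1) * (kad - L2)) ^ 2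
        - L2 ^ 2 * kap * ωo * (kad + ωo - L2) := by
    have hkey := key ωo le_rfl
    rw [hq ωo] at hkey
    exact hkey
  subst hkp hkd hki
  have hfeq : (kap + ωo * kad - L1) * (kad + ωo - L2) - ωo * kap
      = kad * ωo ^ 2 + (kad * (kad - L2) - L1) * ωo + (kap - L1) * (kad - L2) := by ring
  have hsnn : 0 ≤ Real.sqrt (ωo * kap * (kad + ωo - L2)) := Real.sqrt_nonneg _
  have hs2 : Real.sqrt (ωo * kap * (kad + ωo - L2)) ^ 2 = ωo * kap * (kad + ωo - L2) :=
    Real.sq_sqrt (by positivity)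
  refine ⟨?_, ?_, ?_⟩
  · rw [gt_iff_lt, hfeq]
    nlinarith [hs2, hquart, hFω, mul_nonneg hL2.le hsnn]
  · rw [gt_iff_lt, hfeq]; exact hFω
  · rw [gt_iff_lt, hfeq]
    nlinarith [hquart]
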